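/- The infimum of the linear functional Ing over the almost entropic points x ∈ Γ̄*_4 satisfying x_{ABCD} = 1 equals the infimum of Ing over the almost entropic points that in addition satisfy the eight symmetry equalities x_A = x_B, x_{AC} = x_{BC}, x_{AD} = x_{BD}, x_{ACD} = x_{BCD}, x_C = x_D, x_{AC} = x_{AD}, x_{BC} = x_{BD}, x_{ABC} = x_{ABD}. -/

import Mathlib

open scoped Classical

/-- Shannon entropy (natural-log base) of a random variable `X` defined on a finite
probability space `(Ω, p)` and taking values in a finite type `α`. -/
noncomputable def ent {Ω α : Type*} [Fintype Ω] [Fintype α] (p : Ω → ℝ) (X : Ω → α) : ℝ :=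
  ∑ a : α, Real.negMulLog (∑ ω : Ω, if X ω = a then p ω else 0)

/-- Index set for the coordinates of `V_n = ℝ^{2^n − 1}`: the nonempty subsets of `[n]`. -/
abbrev EIndex (n : ℕ) := { V : Finset (Fin n) // V.Nonempty }

/-- A point `x ∈ ℝ^{2^n−1}` is entropic if it is the entropy profile of some tuple
`(X_1,…,X_n)` of jointly distributed random variables taking finitely many values:
`x_V = H(X_V)` for every nonempty `V ⊆ [n]`. -/
def IsEntropic {n : ℕ} (x : EIndex n → ℝ) : Prop :=
  ∃ (m k : ℕ) (p : Fin m → ℝ),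
    (∀ ω, 0 ≤ p ω) ∧ (∑ ω, p ω = 1) ∧
    ∃ X : Fin n → Fin m → Fin k,
      ∀ V : EIndex n, x V = ent p (fun ω => fun i : V.1 => X i ω)

/-- The Ingleton quantity `I(A;B|C) + I(A;B|D) + I(C;D) − I(A;B)` evaluated as a linear
combination of the coordinates of a point `x ∈ ℝ^{15}`, where the four indices
`A, B, C, D` are `0, 1, 2, 3 : Fin 4`. -/
noncomputable def Ing4 (x : EIndex 4 → ℝ) : ℝ :=
  (x ⟨{0, 2}, by decide⟩ + x ⟨{1, 2}, by decide⟩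
      - x ⟨{0, 1, 2}, by decide⟩ - x ⟨{2}, by decide⟩)
    + (x ⟨{0, 3}, by decide⟩ + x ⟨{1, 3}, by decide⟩
      - x ⟨{0, 1, 3}, by decide⟩ - x ⟨{3}, by decide⟩)
    + (x ⟨{2}, by decide⟩ + x ⟨{3}, by decide⟩ - x ⟨{2, 3}, by decide⟩)
    - (x ⟨{0}, by decide⟩ + x ⟨{1}, by decide⟩ - x ⟨{0, 1}, by decide⟩)

/-! The almost entropic points form a convex cone: sums come from independent products, and
positive multiples `t • x` from integer multiples followed by an erasure channel revealing the
variables with probability `t / N`, whose additive error `binEntropy (t / N)` vanishes as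
`N → ∞`. The cone is stable under relabelling the variables, while `Ing` and the coordinate
`x_{ABCD}` are invariant under the Klein four-group generated by `A ↔ B` and `C ↔ D`. Averaging
over that group therefore turns every admissible point into a symmetric one with the same
Ingleton value, so both sets of values of `Ing` coincide. -/

open Real Finset Function

noncomputable section

section Entropy

variable {Ω Ω' α β : Type*} [Fintype Ω] [Fintype Ω']

def law (p : Ω → ℝ) (X : Ω → α) (a : α) : ℝ :=
  ∑ ω, if X ω = a then p ω else 0

lemma ent_eq_sum_law [Fintype α] (p : Ω → ℝ) (X : Ω → α) :
    ent p X = ∑ a, negMulLog (law p X a) := rfl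

lemma sum_law [Fintype α] (p : Ω → ℝ) (X : Ω → α) : ∑ a, law p X a = ∑ ω, p ω := by
  unfold law
  rw [Finset.sum_comm]
  simp

lemma ent_comp_of_injective [Fintype α] [Fintype β] (p : Ω → ℝ) (X : Ω → α) {g : α → β}
    (hg : Injective g) :
    ent p (g ∘ X) = ent p X := by
  have law_comp : ∀ a, law p (g ∘ X) (g a) = law p X a := fun a => by
    simp only [law, comp_apply, hg.eq_iff]
  have law_eq_zero : ∀ b ∉ Set.range g, law p (g ∘ X) b = 0 := fun b hb =>
    Finset.sum_eq_zero fun ω _ => if_neg fun h => hb ⟨X ω, h⟩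
  rw [ent_eq_sum_law, ent_eq_sum_law]
  refine (Fintype.sum_of_injective g hg _ _ (fun b hb => ?_) fun a => ?_).symm
  · rw [law_eq_zero b hb, negMulLog_zero]
  · rw [law_comp]

lemma ent_comp_equiv [Fintype α] (p : Ω → ℝ) (X : Ω → α) (e : Ω' ≃ Ω) :
    ent (p ∘ e) (X ∘ e) = ent p X := by
  simp only [ent_eq_sum_law, law, comp_apply]
  congr! 2 with a
  exact e.sum_comp fun ω => if X ω = a then p ω else 0

lemma law_prodMk (p : Ω → ℝ) (q : Ω' → ℝ) (X : Ω → α) (Y : Ω' → β) (c : α × β) :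
    law (fun ω : Ω × Ω' => p ω.1 * q ω.2) (fun ω => (X ω.1, Y ω.2)) c
      = law p X c.1 * law q Y c.2 := by
  simp only [law, Fintype.sum_prod_type, Finset.sum_mul_sum, Prod.ext_iff]
  congr! 2 with ω _ ω' _
  split_ifs <;> simp_all

lemma ent_prodMk [Fintype α] [Fintype β] (p : Ω → ℝ) (q : Ω' → ℝ) (hp : ∑ ω, p ω = 1)
    (hq : ∑ ω, q ω = 1) (X : Ω → α) (Y : Ω' → β) :
    ent (fun ω : Ω × Ω' => p ω.1 * q ω.2) (fun ω => (X ω.1, Y ω.2)) = ent p X + ent q Y := by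
  have hX := sum_law p X
  have hY := sum_law q Y
  rw [hp] at hX
  rw [hq] at hY
  simp only [ent_eq_sum_law, law_prodMk, Fintype.sum_prod_type, negMulLog_mul,
    Finset.sum_add_distrib, ← Finset.sum_mul, ← Finset.mul_sum, hX, hY, one_mul]

end Entropy

section Erasure

variable {Ω α : Type*} [Fintype Ω]

lemma law_erase_none (p : Ω → ℝ) (hp1 : ∑ ω, p ω = 1) (X : Ω → α) (lam : ℝ) :
    law (fun ω : Ω × Bool => p ω.1 * if ω.2 then lam else 1 - lam)
      (fun ω => if ω.2 then some (X ω.1) else none) none = 1 - lam := by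
  simp [law, Fintype.sum_prod_type, ← Finset.sum_mul, hp1]

lemma law_erase_some (p : Ω → ℝ) (X : Ω → α) (lam : ℝ) (a : α) :
    law (fun ω : Ω × Bool => p ω.1 * if ω.2 then lam else 1 - lam)
      (fun ω => if ω.2 then some (X ω.1) else none) (some a) = lam * law p X a := by
  simp [law, Fintype.sum_prod_type, Finset.mul_sum, mul_comm]

lemma ent_erase [Fintype α] (p : Ω → ℝ) (hp1 : ∑ ω, p ω = 1) (X : Ω → α) (lam : ℝ) :
    ent (fun ω : Ω × Bool => p ω.1 * if ω.2 then lam else 1 - lam)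
      (fun ω => if ω.2 then some (X ω.1) else none) = lam * ent p X + binEntropy lam := by
  have hX := sum_law p X
  rw [hp1] at hX
  simp only [ent_eq_sum_law, Fintype.sum_option, law_erase_none p hp1, law_erase_some,
    negMulLog_mul, Finset.sum_add_distrib, ← Finset.sum_mul, ← Finset.mul_sum, hX,
    binEntropy_eq_negMulLog_add_negMulLog_one_sub]
  ring

end Erasure

def EIndex.image {n m : ℕ} (σ : Fin n → Fin m) (V : EIndex n) : EIndex m :=
  ⟨V.1.image σ, V.2.image σ⟩

lemma EIndex.image_image {n m l : ℕ} (σ : Fin m → Fin l) (τ : Fin n → Fin m) (V : EIndex n) :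
    EIndex.image σ (EIndex.image τ V) = EIndex.image (σ ∘ τ) V :=
  Subtype.ext (Finset.image_image ..)

lemma EIndex.image_id {n : ℕ} (V : EIndex n) : EIndex.image id V = V :=
  Subtype.ext Finset.image_id

lemma apply_eq_of_comp_image_eq {n : ℕ} {σ : Fin n → Fin n} {w : EIndex n → ℝ}
    (hw : w ∘ EIndex.image σ = w) {V W : EIndex n} (hVW : V.1.image σ = W.1) : w V = w W :=
  (congrFun hw V).symm.trans (congrArg w (Subtype.ext hVW))

lemma injective_optionMap_apply {ι α : Type*} [Nonempty ι] :
    Injective fun (o : Option (ι → α)) (i : ι) => o.map (· i) := by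
  obtain ⟨i⟩ := ‹Nonempty ι›
  rintro (_ | f) (_ | g) h
  · rfl
  · exact absurd (congrFun h i) (by simp)
  · exact absurd (congrFun h i) (by simp)
  · exact congrArg some (funext fun j => Option.some_injective _ (congrFun h j))

section IsEntropic

variable {n : ℕ}

lemma isEntropic_of_fintype (x : EIndex n → ℝ) {Ω α : Type} [Fintype Ω] [Fintype α]
    (p : Ω → ℝ) (hp : ∀ ω, 0 ≤ p ω) (hp1 : ∑ ω, p ω = 1) (X : Fin n → Ω → α)
    (hx : ∀ V : EIndex n, x V = ent p (fun ω (i : V.1) => X i ω)) : IsEntropic x := by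
  let e := (Fintype.equivFin Ω).symm
  let g := Fintype.equivFin α
  refine ⟨Fintype.card Ω, Fintype.card α, p ∘ e, fun ω => hp _, by rwa [← e.sum_comp p] at hp1,
    fun i => g ∘ X i ∘ e, fun V => ?_⟩
  rw [hx V, ← ent_comp_equiv p _ e,
    ← ent_comp_of_injective _ _ (g.injective.comp_left : Injective fun (f : V.1 → α) => g ∘ f)]
  rfl

lemma isEntropic_zero : IsEntropic (0 : EIndex n → ℝ) :=
  isEntropic_of_fintype 0 (fun _ : Unit => 1) (fun _ => zero_le_one) (by simp)
    (fun _ _ => ()) fun V => by simp [ent_eq_sum_law, law]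

lemma IsEntropic.add {x y : EIndex n → ℝ} (hx : IsEntropic x) (hy : IsEntropic y) :
    IsEntropic (x + y) := by
  obtain ⟨m, k, p, hp, hp1, X, hX⟩ := hx
  obtain ⟨m', k', q, hq, hq1, Y, hY⟩ := hy
  refine isEntropic_of_fintype _ (fun ω : Fin m × Fin m' => p ω.1 * q ω.2)
    (fun ω => mul_nonneg (hp _) (hq _))
    (by rw [Fintype.sum_prod_type, ← Finset.sum_mul_sum, hp1, hq1, one_mul])
    (fun i ω => (X i ω.1, Y i ω.2)) fun V => ?_
  rw [Pi.add_apply, hX V, hY V, ← ent_prodMk p q hp1 hq1,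
    ← ent_comp_of_injective _ _ (Equiv.arrowProdEquivProdArrow V.1 _ _).symm.injective]
  rfl

lemma IsEntropic.erase {x : EIndex n → ℝ} (hx : IsEntropic x) {lam : ℝ} (h0 : 0 ≤ lam)
    (h1 : lam ≤ 1) : IsEntropic (lam • x + binEntropy lam • 1) := by
  obtain ⟨m, k, p, hp, hp1, X, hX⟩ := hx
  refine isEntropic_of_fintype _ (fun ω : Fin m × Bool => p ω.1 * if ω.2 then lam else 1 - lam)
    (fun ω => mul_nonneg (hp _) (by split_ifs <;> linarith))
    (by simp [Fintype.sum_prod_type, ← mul_add, hp1])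
    (fun i ω => if ω.2 then some (X i ω.1) else none) fun V => ?_
  have : Nonempty V.1 := V.2.to_subtype
  rw [Pi.add_apply, Pi.smul_apply, Pi.smul_apply, hX V, Pi.one_apply, smul_eq_mul, smul_eq_mul,
    mul_one, ← ent_erase p hp1, ← ent_comp_of_injective _ _ injective_optionMap_apply]
  congr 1
  ext ⟨ω, _ | _⟩ <;> rfl

lemma IsEntropic.comp_image {m : ℕ} {x : EIndex m → ℝ} (hx : IsEntropic x)
    (σ : Fin n → Fin m) : IsEntropic (x ∘ EIndex.image σ) := by
  obtain ⟨k, l, p, hp, hp1, X, hX⟩ := hx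
  refine isEntropic_of_fintype _ p hp hp1 (fun i => X (σ i)) fun V => ?_
  have hσ : ∀ i : V.1, σ i ∈ V.1.image σ := fun i => Finset.mem_image_of_mem σ i.2
  have restrict_injective : Injective fun (f : V.1.image σ → Fin l) (i : V.1) => f ⟨σ i, hσ i⟩ := by
    intro f g h
    funext ⟨j, hj⟩
    obtain ⟨i, hi, rfl⟩ := Finset.mem_image.1 hj
    exact congrFun h ⟨i, hi⟩
  rw [comp_apply, hX]
  exact (ent_comp_of_injective p (fun ω (j : V.1.image σ) => X j ω) restrict_injective).symm

end IsEntropic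

section AlmostEntropic

open Filter Topology

variable {n : ℕ} {x y : EIndex n → ℝ}

lemma add_mem_closure_isEntropic (hx : x ∈ closure {z | IsEntropic z})
    (hy : y ∈ closure {z | IsEntropic z}) : x + y ∈ closure {z | IsEntropic z} :=
  map_mem_closure₂ continuous_add hx hy fun _ hx' _ hy' => hx'.add hy'

lemma natCast_smul_mem_closure_isEntropic (hx : x ∈ closure {z | IsEntropic z}) (N : ℕ) :
    (N : ℝ) • x ∈ closure {z | IsEntropic z} := by
  induction N with
  | zero =>
    rw [Nat.cast_zero, zero_smul]
    exact subset_closure isEntropic_zero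
  | succ N ih =>
    rw [Nat.cast_succ, add_smul, one_smul]
    exact add_mem_closure_isEntropic ih hx

lemma erase_mem_closure_isEntropic (hx : x ∈ closure {z | IsEntropic z}) {lam : ℝ}
    (h0 : 0 ≤ lam) (h1 : lam ≤ 1) :
    lam • x + binEntropy lam • 1 ∈ closure {z | IsEntropic z} :=
  map_mem_closure (f := fun z => lam • z + binEntropy lam • 1) (by fun_prop) hx
    fun _ hz => IsEntropic.erase hz h0 h1

lemma smul_mem_closure_isEntropic (hx : x ∈ closure {z | IsEntropic z}) {t : ℝ} (ht : 0 ≤ t) :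
    t • x ∈ closure {z | IsEntropic z} := by
  have hlim : Tendsto (fun N : ℕ => t • x + binEntropy (t / N) • (1 : EIndex n → ℝ)) atTop
      (𝓝 (t • x)) := by
    have := (binEntropy_continuous.tendsto 0).comp (tendsto_const_div_atTop_nhds_zero_nat t)
    simpa using tendsto_const_nhds.add (this.smul_const (1 : EIndex n → ℝ))
  refine isClosed_closure.mem_of_tendsto hlim ?_
  filter_upwards [eventually_gt_atTop 0, eventually_ge_atTop ⌈t⌉₊] with N hN htN
  have hN' : (0 : ℝ) < N := Nat.cast_pos.2 hN
  have hscale : t • x = (t / N) • ((N : ℝ) • x) := by rw [smul_smul, div_mul_cancel₀ _ hN'.ne']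
  rw [hscale]
  exact erase_mem_closure_isEntropic (natCast_smul_mem_closure_isEntropic hx N)
    (div_nonneg ht hN'.le) (div_le_one_of_le₀ (Nat.ceil_le.1 htN) hN'.le)

def almostEntropicCone (n : ℕ) : ConvexCone ℝ (EIndex n → ℝ) where
  carrier := closure {z | IsEntropic z}
  smul_mem' _ hc _ hx := smul_mem_closure_isEntropic hx hc.le
  add_mem' _ hx _ hy := add_mem_closure_isEntropic hx hy

lemma comp_image_mem_almostEntropicCone {m : ℕ} {x : EIndex m → ℝ}
    (hx : x ∈ almostEntropicCone m) (σ : Fin n → Fin m) :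
    x ∘ EIndex.image σ ∈ almostEntropicCone n :=
  map_mem_closure (f := fun z => z ∘ EIndex.image σ) (continuous_pi fun _ => continuous_apply _) hx
    fun _ hz => hz.comp_image σ

end AlmostEntropic

section Ingleton

variable {n m : ℕ}

def mutualInfo (x : EIndex n → ℝ) (a b : Fin n) : ℝ :=
  x ⟨{a}, singleton_nonempty a⟩ + x ⟨{b}, singleton_nonempty b⟩ - x ⟨{a, b}, insert_nonempty _ _⟩

def condMutualInfo (x : EIndex n → ℝ) (a b c : Fin n) : ℝ :=
  x ⟨{a, c}, insert_nonempty _ _⟩ + x ⟨{b, c}, insert_nonempty _ _⟩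
    - x ⟨{a, b, c}, insert_nonempty _ _⟩ - x ⟨{c}, singleton_nonempty c⟩

def ingleton (x : EIndex n → ℝ) (a b c d : Fin n) : ℝ :=
  condMutualInfo x a b c + condMutualInfo x a b d + mutualInfo x c d - mutualInfo x a b

lemma Ing4_eq_ingleton (x : EIndex 4 → ℝ) : Ing4 x = ingleton x 0 1 2 3 := rfl

lemma ingleton_comp_image (x : EIndex m → ℝ) (σ : Fin n → Fin m) (a b c d : Fin n) :
    ingleton (x ∘ EIndex.image σ) a b c d = ingleton x (σ a) (σ b) (σ c) (σ d) := by
  simp [ingleton, condMutualInfo, mutualInfo, EIndex.image, Finset.image_insert]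

lemma ingleton_swap_left (x : EIndex n → ℝ) (a b c d : Fin n) :
    ingleton x b a c d = ingleton x a b c d := by
  simp only [ingleton, condMutualInfo, mutualInfo, Finset.insert_comm b a, Finset.pair_comm b a]
  ring

lemma ingleton_swap_right (x : EIndex n → ℝ) (a b c d : Fin n) :
    ingleton x a b d c = ingleton x a b c d := by
  simp only [ingleton, condMutualInfo, mutualInfo, Finset.pair_comm d c]
  ring

lemma ingleton_add (x y : EIndex n → ℝ) (a b c d : Fin n) :
    ingleton (x + y) a b c d = ingleton x a b c d + ingleton y a b c d := by
  simp only [ingleton, condMutualInfo, mutualInfo, Pi.add_apply]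
  ring

lemma ingleton_smul (t : ℝ) (x : EIndex n → ℝ) (a b c d : Fin n) :
    ingleton (t • x) a b c d = t * ingleton x a b c d := by
  simp only [ingleton, condMutualInfo, mutualInfo, Pi.smul_apply, smul_eq_mul]
  ring

end Ingleton

section SwapAverage

variable {n : ℕ} {σ τ : Fin n → Fin n} {x : EIndex n → ℝ}

def swapAverage (σ : Fin n → Fin n) (x : EIndex n → ℝ) : EIndex n → ℝ :=
  (1 / 2 : ℝ) • (x + x ∘ EIndex.image σ)

lemma swapAverage_mem_almostEntropicCone (hx : x ∈ almostEntropicCone n) :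
    swapAverage σ x ∈ almostEntropicCone n :=
  (almostEntropicCone n).smul_mem one_half_pos
    ((almostEntropicCone n).add_mem hx (comp_image_mem_almostEntropicCone hx σ))

lemma swapAverage_comp_image_self (hσ : Involutive σ) :
    swapAverage σ x ∘ EIndex.image σ = swapAverage σ x := by
  funext V
  simp only [swapAverage, comp_apply, Pi.smul_apply, Pi.add_apply, EIndex.image_image,
    hσ.comp_self, EIndex.image_id, add_comm]

lemma swapAverage_comp_image_of_commute (hστ : σ ∘ τ = τ ∘ σ) (hx : x ∘ EIndex.image τ = x) :
    swapAverage σ x ∘ EIndex.image τ = swapAverage σ x := by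
  have hxσ : (x ∘ EIndex.image σ) ∘ EIndex.image τ = x ∘ EIndex.image σ := by
    funext V
    rw [comp_apply, comp_apply, EIndex.image_image, hστ, ← EIndex.image_image]
    exact congrFun hx _
  simp only [swapAverage, Pi.smul_comp, Pi.add_comp, hx, hxσ]

lemma swapAverage_apply_of_image_eq {V : EIndex n} (hV : EIndex.image σ V = V) :
    swapAverage σ x V = x V := by
  simp only [swapAverage, Pi.smul_apply, Pi.add_apply, comp_apply, hV, smul_eq_mul]
  ring

lemma ingleton_swapAverage {a b c d : Fin n}
    (h : ingleton (x ∘ EIndex.image σ) a b c d = ingleton x a b c d) :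
    ingleton (swapAverage σ x) a b c d = ingleton x a b c d := by
  rw [swapAverage, ingleton_smul, ingleton_add, h]
  ring

end SwapAverage

section Klein

def kleinAverage (x : EIndex 4 → ℝ) : EIndex 4 → ℝ :=
  swapAverage (Equiv.swap 2 3) (swapAverage (Equiv.swap 0 1) x)

lemma kleinAverage_mem_almostEntropicCone {x : EIndex 4 → ℝ} (hx : x ∈ almostEntropicCone 4) :
    kleinAverage x ∈ almostEntropicCone 4 :=
  swapAverage_mem_almostEntropicCone (swapAverage_mem_almostEntropicCone hx)

variable (x : EIndex 4 → ℝ)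

lemma kleinAverage_comp_swap_AB :
    kleinAverage x ∘ EIndex.image (Equiv.swap 0 1) = kleinAverage x :=
  swapAverage_comp_image_of_commute (by decide)
    (swapAverage_comp_image_self (Equiv.swap_apply_self _ _))

lemma kleinAverage_comp_swap_CD :
    kleinAverage x ∘ EIndex.image (Equiv.swap 2 3) = kleinAverage x :=
  swapAverage_comp_image_self (Equiv.swap_apply_self _ _)

lemma kleinAverage_apply_ABCD :
    kleinAverage x ⟨{0, 1, 2, 3}, by decide⟩ = x ⟨{0, 1, 2, 3}, by decide⟩ := by
  rw [kleinAverage, swapAverage_apply_of_image_eq (by decide),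
    swapAverage_apply_of_image_eq (by decide)]

lemma Ing4_kleinAverage : Ing4 (kleinAverage x) = Ing4 x := by
  simp only [Ing4_eq_ingleton, kleinAverage]
  rw [ingleton_swapAverage, ingleton_swapAverage] <;>
    simp [ingleton_comp_image, Equiv.swap_apply_of_ne_of_ne, ingleton_swap_left,
      ingleton_swap_right]

end Klein

end

/-- The infimum of the linear functional `Ing` over the almost entropic points with
`x_{ABCD} = 1` equals the infimum of `Ing` over the almost entropic points satisfying in
addition the eight symmetry equalities
`x_A = x_B`, `x_{AC} = x_{BC}`, `x_{AD} = x_{BD}`, `x_{ACD} = x_{BCD}`,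
`x_C = x_D`, `x_{AC} = x_{AD}`, `x_{BC} = x_{BD}`, `x_{ABC} = x_{ABD}`
(indices `A, B, C, D` are `0, 1, 2, 3 : Fin 4`). -/
theorem ingleton_inf_eq_inf_over_symmetric_points :
    sInf (Ing4 '' { x : EIndex 4 → ℝ |
        x ∈ closure { y : EIndex 4 → ℝ | IsEntropic y } ∧
        x ⟨{0, 1, 2, 3}, by decide⟩ = 1 })
      =
    sInf (Ing4 '' { x : EIndex 4 → ℝ |
        x ∈ closure { y : EIndex 4 → ℝ | IsEntropic y } ∧
        x ⟨{0, 1, 2, 3}, by decide⟩ = 1 ∧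
        x ⟨{0}, by decide⟩ = x ⟨{1}, by decide⟩ ∧
        x ⟨{0, 2}, by decide⟩ = x ⟨{1, 2}, by decide⟩ ∧
        x ⟨{0, 3}, by decide⟩ = x ⟨{1, 3}, by decide⟩ ∧
        x ⟨{0, 2, 3}, by decide⟩ = x ⟨{1, 2, 3}, by decide⟩ ∧
        x ⟨{2}, by decide⟩ = x ⟨{3}, by decide⟩ ∧
        x ⟨{0, 2}, by decide⟩ = x ⟨{0, 3}, by decide⟩ ∧
        x ⟨{1, 2}, by decide⟩ = x ⟨{1, 3}, by decide⟩ ∧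
        x ⟨{0, 1, 2}, by decide⟩ = x ⟨{0, 1, 3}, by decide⟩ }) := by
  congr 1
  refine Set.Subset.antisymm ?_ (Set.image_mono fun x hx => ⟨hx.1, hx.2.1⟩)
  rintro _ ⟨x, ⟨hx, hx1⟩, rfl⟩
  have hAB := kleinAverage_comp_swap_AB x
  have hCD := kleinAverage_comp_swap_CD x
  refine ⟨kleinAverage x, ⟨kleinAverage_mem_almostEntropicCone hx,
    (kleinAverage_apply_ABCD x).trans hx1, ?_⟩, Ing4_kleinAverage x⟩
  exact ⟨apply_eq_of_comp_image_eq hAB (by decide), apply_eq_of_comp_image_eq hAB (by decide),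
    apply_eq_of_comp_image_eq hAB (by decide), apply_eq_of_comp_image_eq hAB (by decide),
    apply_eq_of_comp_image_eq hCD (by decide), apply_eq_of_comp_image_eq hCD (by decide),
    apply_eq_of_comp_image_eq hCD (by decide), apply_eq_of_comp_image_eq hCD (by decide)⟩
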